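/- arXiv:2208.06072 — 2 statements merged into one kernel-verified Lean document; each statement's English description precedes it below -/
import Mathlib

section
/- Let N and M be positive integers, let G be a random N × M complex matrix and h a random vector in ℂ^N, with G and h independent, and with all entries of G and of h mutually independent and each distributed as a standard circularly-symmetric complex Gaussian CN(0,1). Then E[‖Gᵀ h‖⁴] = (M² + M)(N² + N), where (Gᵀ h)_m = Σ_{n=1}^N G_{n m} h_n. -/
open MeasureTheory ProbabilityTheory Matrix

/-- The law of a standard circularly-symmetric complex Gaussian `CN(0,1)`:
the pushforward of the product of two real Gaussians `N(0, 1/2)` under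
`(x, y) ↦ x + i y`. -/
noncomputable def stdComplexGaussian : Measure ℂ :=
  ((gaussianReal 0 (1/2)).prod (gaussianReal 0 (1/2))).map
    (fun p => (p.1 : ℂ) + (p.2 : ℂ) * Complex.I)

/-!
Expanding the square and the squared norms writes `‖Gᵀ h‖⁴` as a sum of monomials
`(G n₁ m * conj (G n₂ m) * G n₃ m' * conj (G n₄ m')) * (h n₁ * conj (h n₂) * h n₃ * conj (h n₄))`.
By independence the expectation of such a monomial is a product of mixed moments
`E[z ^ a * conj z ^ b]`, `a, b ≤ 2`, of `CN(0,1)`. These vanish for `a ≠ b`, because `CN(0,1)` is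
invariant under `z ↦ I * z`, while `E|z|² = 1` and `E|z|⁴ = 2` (from `E x⁴ = 3σ⁴` for the real
parts). This is Isserlis' formula `E[z_a z̄_b z_c z̄_d] = δ_ab δ_cd + δ_ad δ_cb` for both blocks,
and summing the products of the two pairing sums over all indices gives `(M² + M)(N² + N)`.
-/

open Real Complex ComplexConjugate
open scoped NNReal ENNReal

lemma Multiset.pair_eq_pair_iff {α : Type*} {a b c d : α} :
    ({a, c} : Multiset α) = {b, d} ↔ a = b ∧ c = d ∨ a = d ∧ c = b := by
  refine ⟨fun h => ?_, ?_⟩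
  · rcases Multiset.cons_eq_cons.mp h with ⟨rfl, hcd⟩ | ⟨-, cs, hc, hd⟩
    · exact Or.inl ⟨rfl, Multiset.singleton_inj.mp hcd⟩
    · exact Or.inr ⟨((Multiset.singleton_eq_cons_iff _).mp hd).1.symm,
        ((Multiset.singleton_eq_cons_iff _).mp hc).1⟩
  · rintro (⟨rfl, rfl⟩ | ⟨rfl, rfl⟩)
    · rfl
    · exact Multiset.pair_comm _ _

lemma Fintype.prod_pow_count {κ M : Type*} [Fintype κ] [DecidableEq κ] [CommMonoid M]
    (f : κ → M) (s : Multiset κ) : ∏ i, f i ^ s.count i = (s.map f).prod := by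
  rw [Finset.prod_multiset_map_count]
  refine (Finset.prod_subset (Finset.subset_univ _) fun i _ hi => ?_).symm
  rw [Multiset.count_eq_zero.mpr (by simpa using hi), pow_zero]

lemma ProbabilityTheory.iIndepFun.integrable_fun_prod_comp {Ω ι 𝕜 : Type*} [MeasurableSpace Ω]
    {μ : Measure Ω} [Fintype ι] [RCLike 𝕜] {𝓧 : ι → Type*} {m𝓧 : ∀ i, MeasurableSpace (𝓧 i)}
    {X : (i : ι) → Ω → 𝓧 i} {f : (i : ι) → 𝓧 i → 𝕜} (hX : iIndepFun X μ)
    (mX : ∀ i, AEMeasurable (X i) μ) (hf : ∀ i, Integrable (f i) (μ.map (X i))) :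
    Integrable (fun ω => ∏ i, f i (X i ω)) μ := by
  have := hX.isProbabilityMeasure
  have _ (i : ι) := Measure.isProbabilityMeasure_map (mX i)
  have h := Integrable.fintype_prod_dep hf
  rw [← hX.map_fun_eq_pi_map mX] at h
  exact h.comp_aemeasurable (aemeasurable_pi_lambda _ mX)

lemma deriv_mul_exp_mul_sq_div_two (c : ℝ) {p p' : ℝ → ℝ} (hp : ∀ t, HasDerivAt p (p' t) t) :
    deriv (fun t => p t * rexp (c * t ^ 2 / 2)) =
      fun t => (p' t + c * t * p t) * rexp (c * t ^ 2 / 2) := by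
  ext t
  have he : HasDerivAt (fun t => rexp (c * t ^ 2 / 2)) (rexp (c * t ^ 2 / 2) * (c * t)) t := by
    convert (((hasDerivAt_pow 2 t).const_mul c).div_const 2).exp using 1
    push_cast
    ring
  exact ((hp t).mul he).deriv.trans (by ring)

lemma integrable_pow_gaussianReal (μ : ℝ) (v : ℝ≥0) (k : ℕ) :
    Integrable (fun x => x ^ k) (gaussianReal μ v) :=
  integrable_pow_of_mem_interior_integrableExpSet (X := fun x => x) (by simp) k

lemma integral_sq_gaussianReal_zero (v : ℝ≥0) : ∫ x, x ^ 2 ∂gaussianReal 0 v = v := by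
  have h := variance_fun_id_gaussianReal (μ := 0) (v := v)
  rw [variance_eq_integral (by fun_prop), integral_id_gaussianReal] at h
  simpa using h

lemma integral_pow_four_gaussianReal_zero (v : ℝ≥0) :
    ∫ x, x ^ 4 ∂gaussianReal 0 v = 3 * v ^ 2 := by
  have h := iteratedDeriv_mgf_zero (X := fun x : ℝ => x) (μ := gaussianReal 0 v) (by simp) 4
  simp only [mgf_fun_id_gaussianReal, zero_mul, zero_add, Pi.pow_apply] at h
  rw [← h, ← funext fun t => one_mul (rexp (v * t ^ 2 / 2)), iteratedDeriv_succ',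
    deriv_mul_exp_mul_sq_div_two _ (hasDerivAt_const · 1), iteratedDeriv_succ',
    deriv_mul_exp_mul_sq_div_two (p' := fun _ => v) _ fun t => ?_, iteratedDeriv_succ',
    deriv_mul_exp_mul_sq_div_two (p' := fun t => 2 * v ^ 2 * t) _ fun t => ?_, iteratedDeriv_one,
    deriv_mul_exp_mul_sq_div_two (p' := fun t => 3 * v ^ 2 + 3 * v ^ 3 * t ^ 2) _ fun t => ?_]
  · simp
  all_goals
    refine (by fun_prop : DifferentiableAt ℝ _ t).hasDerivAt.congr_deriv ?_
    simp (disch := fun_prop) [deriv_fun_add, deriv_fun_mul]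
  all_goals ring

lemma stdComplexGaussian_eq_map_equivRealProdCLM_symm :
    stdComplexGaussian =
      ((gaussianReal 0 (1/2)).prod (gaussianReal 0 (1/2))).map equivRealProdCLM.symm := by
  simp only [stdComplexGaussian]
  congr 1 with p
  exact (equivRealProdCLM_symm_apply p).symm

instance isGaussian_stdComplexGaussian : IsGaussian stdComplexGaussian := by
  rw [stdComplexGaussian_eq_map_equivRealProdCLM_symm]
  infer_instance

lemma integrable_pow_mul_conj_pow_stdComplexGaussian (a b : ℕ) :
    Integrable (fun z : ℂ => z ^ a * conj z ^ b) stdComplexGaussian := by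
  refine (IsGaussian.memLp_id _ ((a + b : ℕ) : ℝ≥0∞) (by simp)).integrable_norm_pow'.mono'
    (by fun_prop) (ae_of_all _ fun z => ?_)
  simp [pow_add]

lemma norm_ofReal_add_ofReal_mul_I_sq (x y : ℝ) : ‖(x : ℂ) + y * I‖ ^ 2 = x ^ 2 + y ^ 2 := by
  rw [Complex.sq_norm, normSq_add_mul_I]

lemma integral_norm_sq_stdComplexGaussian : ∫ z, ‖z‖ ^ 2 ∂stdComplexGaussian = 1 := by
  have hint (a b : ℕ) :=
    (integrable_pow_gaussianReal 0 (1/2) a).mul_prod (integrable_pow_gaussianReal 0 (1/2) b)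
  have hsq (p : ℝ × ℝ) : ‖(p.1 : ℂ) + p.2 * I‖ ^ 2 = p.1 ^ 2 * p.2 ^ 0 + p.1 ^ 0 * p.2 ^ 2 := by
    simp [norm_ofReal_add_ofReal_mul_I_sq]
  rw [stdComplexGaussian, integral_map (by fun_prop) (by fun_prop)]
  simp_rw [hsq]
  rw [integral_add (hint 2 0) (hint 0 2), integral_prod_mul (fun x : ℝ => x ^ 2) (fun x => x ^ 0),
    integral_prod_mul (fun x : ℝ => x ^ 0) (fun x => x ^ 2), integral_sq_gaussianReal_zero]
  norm_num

lemma integral_norm_pow_four_stdComplexGaussian : ∫ z, ‖z‖ ^ 4 ∂stdComplexGaussian = 2 := by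
  have hint (a b : ℕ) :=
    (integrable_pow_gaussianReal 0 (1/2) a).mul_prod (integrable_pow_gaussianReal 0 (1/2) b)
  have hsq (p : ℝ × ℝ) : ‖(p.1 : ℂ) + p.2 * I‖ ^ 4 =
      p.1 ^ 4 * p.2 ^ 0 + p.1 ^ 0 * p.2 ^ 4 + 2 * (p.1 ^ 2 * p.2 ^ 2) := by
    rw [show 4 = 2 * 2 from rfl, pow_mul, norm_ofReal_add_ofReal_mul_I_sq]
    ring
  rw [stdComplexGaussian, integral_map (by fun_prop) (by fun_prop)]
  simp_rw [hsq]
  rw [integral_add ((hint 4 0).fun_add (hint 0 4)) ((hint 2 2).const_mul 2),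
    integral_add (hint 4 0) (hint 0 4), integral_const_mul,
    integral_prod_mul (fun x : ℝ => x ^ 4) (fun x => x ^ 0),
    integral_prod_mul (fun x : ℝ => x ^ 0) (fun x => x ^ 4),
    integral_prod_mul (fun x : ℝ => x ^ 2) (fun x => x ^ 2),
    integral_sq_gaussianReal_zero, integral_pow_four_gaussianReal_zero]
  norm_num

lemma stdComplexGaussian_map_I_mul : stdComplexGaussian.map (I * ·) = stdComplexGaussian := by
  have hrot : (fun z => I * z) ∘ (fun p : ℝ × ℝ => (p.1 : ℂ) + p.2 * I) =
      (fun p : ℝ × ℝ => (p.1 : ℂ) + p.2 * I) ∘ Prod.map (fun x => -x) id ∘ Prod.swap := by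
    ext p
    simp only [Function.comp_apply, Prod.map_fst, Prod.map_snd, Prod.fst_swap, Prod.snd_swap, id]
    push_cast
    linear_combination (p.2 : ℂ) * I_sq
  rw [stdComplexGaussian, Measure.map_map (by fun_prop) (by fun_prop), hrot,
    ← Measure.map_map (by fun_prop) (by fun_prop), ← Measure.map_map (by fun_prop) (by fun_prop),
    Measure.prod_swap, ← Measure.map_prod_map _ _ (by fun_prop) (by fun_prop),
    gaussianReal_map_neg, Measure.map_id, neg_zero]

lemma integral_pow_mul_conj_pow_stdComplexGaussian_of_mod_four_ne {a b : ℕ}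
    (hab : a % 4 ≠ b % 4) : ∫ z, z ^ a * conj z ^ b ∂stdComplexGaussian = 0 := by
  have hrot : ∫ z, z ^ a * conj z ^ b ∂stdComplexGaussian =
      I ^ (a + 3 * b) * ∫ z, z ^ a * conj z ^ b ∂stdComplexGaussian := by
    conv_lhs => rw [← stdComplexGaussian_map_I_mul]
    rw [integral_map (by fun_prop) (by fun_prop), ← integral_const_mul]
    congr 1 with z
    rw [map_mul, conj_I, ← I_pow_three, mul_pow, mul_pow, ← pow_mul, pow_add]
    ring
  have hI : I ^ (a + 3 * b) ≠ 1 := by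
    rw [I_pow_eq_pow_mod]
    have : (a + 3 * b) % 4 = 1 ∨ (a + 3 * b) % 4 = 2 ∨ (a + 3 * b) % 4 = 3 := by omega
    rcases this with h | h | h <;> norm_num [h, pow_succ, Complex.ext_iff]
  by_contra hF
  exact hI ((mul_eq_right₀ hF).mp hrot.symm)

lemma integral_pow_mul_conj_pow_self_stdComplexGaussian (k : ℕ) :
    ∫ z, z ^ k * conj z ^ k ∂stdComplexGaussian =
      ((∫ z, ‖z‖ ^ (2 * k) ∂stdComplexGaussian : ℝ) : ℂ) := by
  rw [← integral_complex_ofReal]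
  congr 1 with z
  rw [← mul_pow, mul_conj', pow_mul]
  push_cast
  rfl

lemma integral_mul_conj_stdComplexGaussian : ∫ z, z * conj z ∂stdComplexGaussian = 1 := by
  simpa [integral_norm_sq_stdComplexGaussian] using
    integral_pow_mul_conj_pow_self_stdComplexGaussian 1

lemma integral_sq_mul_conj_sq_stdComplexGaussian :
    ∫ z, z ^ 2 * conj z ^ 2 ∂stdComplexGaussian = 2 := by
  rw [integral_pow_mul_conj_pow_self_stdComplexGaussian, integral_norm_pow_four_stdComplexGaussian]
  norm_num

def wickPairings {ι : Type*} [DecidableEq ι] (a b c d : ι) : ℂ :=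
  (if a = b ∧ c = d then 1 else 0) + (if a = d ∧ c = b then 1 else 0)

lemma prod_integral_pow_count_mul_conj_pow_count_eq_wickPairings {ι : Type*} [Fintype ι]
    [DecidableEq ι] (a b c d : ι) :
    ∏ i, ∫ z, z ^ Multiset.count i {a, c} * conj z ^ Multiset.count i {b, d} ∂stdComplexGaussian =
      wickPairings a b c d := by
  unfold wickPairings
  by_cases hW : ({a, c} : Multiset ι) = {b, d}
  · have hW' := Multiset.pair_eq_pair_iff.mp hW
    rw [← hW]
    rcases eq_or_ne a c with rfl | hac
    · rw [Fintype.prod_eq_single a fun i hi => by simp [hi]]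
      obtain ⟨rfl, rfl⟩ : a = b ∧ a = d := hW'.elim id And.symm
      simp [Multiset.insert_eq_cons, integral_sq_mul_conj_sq_stdComplexGaussian]
      norm_num
    · rw [Fintype.prod_eq_mul a c hac fun i hi => by simp [hi.1, hi.2]]
      simp [hac, Ne.symm hac, integral_mul_conj_stdComplexGaussian]
      rcases hW' with ⟨rfl, rfl⟩ | ⟨rfl, rfl⟩ <;> simp [hac, Ne.symm hac]
  · obtain ⟨i, hi⟩ := not_forall.mp (mt Multiset.ext.mpr hW)
    have hle (s : Multiset ι) (hs : s.card = 2) : s.count i ≤ 2 := hs ▸ s.count_le_card i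
    have := hle {a, c} rfl
    have := hle {b, d} rfl
    rw [Finset.prod_eq_zero (Finset.mem_univ i)
      (integral_pow_mul_conj_pow_stdComplexGaussian_of_mod_four_ne (by omega))]
    rw [Multiset.pair_eq_pair_iff, not_or] at hW
    rw [if_neg hW.1, if_neg hW.2, add_zero]

section IndependentStdComplexGaussian

variable {Ω ι : Type*} [MeasurableSpace Ω] {μ : Measure Ω} [Fintype ι] {X : ι → Ω → ℂ}

lemma aemeasurable_of_map_eq_stdComplexGaussian {Y : Ω → ℂ}
    (hY : μ.map Y = stdComplexGaussian) : AEMeasurable Y μ :=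
  aemeasurable_of_map_neZero (by rw [hY]; infer_instance)

lemma integrable_prod_pow_mul_conj_pow (hX : iIndepFun X μ)
    (hlaw : ∀ i, μ.map (X i) = stdComplexGaussian) (α β : ι → ℕ) :
    Integrable (fun ω => ∏ i, X i ω ^ α i * conj (X i ω) ^ β i) μ :=
  hX.integrable_fun_prod_comp (f := fun i z => z ^ α i * conj z ^ β i)
    (fun i => aemeasurable_of_map_eq_stdComplexGaussian (hlaw i))
    fun i => (hlaw i).symm ▸ integrable_pow_mul_conj_pow_stdComplexGaussian _ _

lemma integral_prod_pow_mul_conj_pow (hX : iIndepFun X μ)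
    (hlaw : ∀ i, μ.map (X i) = stdComplexGaussian) (α β : ι → ℕ) :
    ∫ ω, ∏ i, X i ω ^ α i * conj (X i ω) ^ β i ∂μ =
      ∏ i, ∫ z, z ^ α i * conj z ^ β i ∂stdComplexGaussian := by
  have mX i := aemeasurable_of_map_eq_stdComplexGaussian (hlaw i)
  rw [hX.integral_fun_prod_comp (f := fun i z => z ^ α i * conj z ^ β i) mX fun i => by fun_prop]
  congr 1 with i
  rw [← hlaw i, integral_map (mX i) (by fun_prop)]

end IndependentStdComplexGaussian

lemma quartic_mul_quartic_eq_prod {Ω κ κ' : Type*} [Fintype κ] [Fintype κ'] [DecidableEq κ]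
    [DecidableEq κ'] (Y : κ → Ω → ℂ) (Z : κ' → Ω → ℂ) (ω : Ω) (a b c d : κ) (a' b' c' d' : κ') :
    (Y a ω * conj (Y b ω) * Y c ω * conj (Y d ω)) *
        (Z a' ω * conj (Z b' ω) * Z c' ω * conj (Z d' ω)) =
      ∏ i, Sum.elim Y Z i ω ^ Sum.elim (Multiset.count · {a, c}) (Multiset.count · {a', c'}) i *
        conj (Sum.elim Y Z i ω) ^
          Sum.elim (Multiset.count · {b, d}) (Multiset.count · {b', d'}) i := by
  rw [Fintype.prod_sum_type]
  simp only [Sum.elim_inl, Sum.elim_inr, Finset.prod_mul_distrib]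
  rw [Fintype.prod_pow_count (Y · ω), Fintype.prod_pow_count (conj <| Y · ω),
    Fintype.prod_pow_count (Z · ω), Fintype.prod_pow_count (conj <| Z · ω)]
  simp only [Multiset.insert_eq_cons, Multiset.map_cons, Multiset.map_singleton,
    Multiset.prod_cons, Multiset.prod_singleton]
  ring

section TwoIndependentFamilies

variable {Ω κ κ' : Type*} [MeasurableSpace Ω] {μ : Measure Ω} [Fintype κ] [Fintype κ']
  [DecidableEq κ] [DecidableEq κ'] {Y : κ → Ω → ℂ} {Z : κ' → Ω → ℂ}

lemma integrable_quartic_mul_quartic (hYZ : iIndepFun (Sum.elim Y Z) μ)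
    (hY : ∀ k, μ.map (Y k) = stdComplexGaussian) (hZ : ∀ k, μ.map (Z k) = stdComplexGaussian)
    (a b c d : κ) (a' b' c' d' : κ') :
    Integrable (fun ω => (Y a ω * conj (Y b ω) * Y c ω * conj (Y d ω)) *
        (Z a' ω * conj (Z b' ω) * Z c' ω * conj (Z d' ω))) μ := by
  simp only [quartic_mul_quartic_eq_prod Y Z _ a b c d a' b' c' d']
  exact integrable_prod_pow_mul_conj_pow hYZ (Sum.forall.mpr ⟨hY, hZ⟩) _ _

lemma integral_quartic_mul_quartic (hYZ : iIndepFun (Sum.elim Y Z) μ)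
    (hY : ∀ k, μ.map (Y k) = stdComplexGaussian) (hZ : ∀ k, μ.map (Z k) = stdComplexGaussian)
    (a b c d : κ) (a' b' c' d' : κ') :
    ∫ ω, (Y a ω * conj (Y b ω) * Y c ω * conj (Y d ω)) *
        (Z a' ω * conj (Z b' ω) * Z c' ω * conj (Z d' ω)) ∂μ =
      wickPairings a b c d * wickPairings a' b' c' d' := by
  simp only [quartic_mul_quartic_eq_prod Y Z _ a b c d a' b' c' d']
  rw [integral_prod_pow_mul_conj_pow hYZ (Sum.forall.mpr ⟨hY, hZ⟩), Fintype.prod_sum_type]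
  simp only [Sum.elim_inl, Sum.elim_inr, prod_integral_pow_count_mul_conj_pow_count_eq_wickPairings]

end TwoIndependentFamilies

lemma ofReal_sq_sum_norm_sq_sum_mul {n m : Type*} [Fintype n] [Fintype m] (G : Matrix n m ℂ)
    (h : n → ℂ) :
    (((∑ j, ‖∑ i, G i j * h i‖ ^ 2) ^ 2 : ℝ) : ℂ) =
      ∑ j, ∑ j', ∑ i₁, ∑ i₂, ∑ i₃, ∑ i₄, (G i₁ j * conj (G i₂ j) * G i₃ j' * conj (G i₄ j')) *
        (h i₁ * conj (h i₂) * h i₃ * conj (h i₄)) := by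
  have hnorm (j : m) : ((‖∑ i, G i j * h i‖ : ℝ) : ℂ) ^ 2 =
      ∑ i₁, ∑ i₂, G i₁ j * h i₁ * conj (G i₂ j * h i₂) := by
    rw [← mul_conj', map_sum, Finset.sum_mul_sum]
  push_cast
  simp_rw [hnorm, sq, Finset.sum_mul_sum]
  congr! 3 with j j' i₁
  rw [Finset.sum_comm]
  congr! 3 with i₂ i₃ i₄
  simp only [map_mul]
  ring

lemma sum_wickPairings_mul_wickPairings {n m : Type*} [Fintype n] [Fintype m] [DecidableEq n]
    [DecidableEq m] :
    ∑ j : m, ∑ j' : m, ∑ i₁ : n, ∑ i₂ : n, ∑ i₃ : n, ∑ i₄ : n,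
      wickPairings (i₁, j) (i₂, j) (i₃, j') (i₄, j') * wickPairings i₁ i₂ i₃ i₄ =
      ((Fintype.card m : ℂ) ^ 2 + Fintype.card m) *
        ((Fintype.card n : ℂ) ^ 2 + Fintype.card n) := by
  simp only [wickPairings, Prod.mk.injEq, and_true]
  simp [add_mul, mul_add, ite_and, Finset.sum_add_distrib, Finset.sum_ite_eq', Finset.sum_ite_irrel]
  ring

theorem expectation_norm_pow_four_cascaded_gaussian_general
    {N M : ℕ}
    {Ω : Type*} [MeasurableSpace Ω] (μ : Measure Ω)
    (G : Ω → Matrix (Fin N) (Fin M) ℂ) (h : Ω → Fin N → ℂ)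
    (hindep : iIndepFun
      (Sum.elim (fun (p : Fin N × Fin M) => fun ω => G ω p.1 p.2)
        (fun (n : Fin N) => fun ω => h ω n)) μ)
    (hdistG : ∀ n m, Measure.map (fun ω => G ω n m) μ = stdComplexGaussian)
    (hdisth : ∀ n, Measure.map (fun ω => h ω n) μ = stdComplexGaussian) :
    (∫ ω, (∑ m, ‖∑ n, G ω n m * h ω n‖ ^ 2) ^ 2 ∂μ)
      = ((M : ℝ) ^ 2 + M) * ((N : ℝ) ^ 2 + N) := by
  have hint (m m' : Fin M) (n₁ n₂ n₃ n₄ : Fin N) := integrable_quartic_mul_quartic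
    (Y := fun p ω => G ω p.1 p.2) hindep (fun p => hdistG p.1 p.2) hdisth
    (n₁, m) (n₂, m) (n₃, m') (n₄, m') n₁ n₂ n₃ n₄
  have hterm (m m' : Fin M) (n₁ n₂ n₃ n₄ : Fin N) := integral_quartic_mul_quartic
    (Y := fun p ω => G ω p.1 p.2) hindep (fun p => hdistG p.1 p.2) hdisth
    (n₁, m) (n₂, m) (n₃, m') (n₄, m') n₁ n₂ n₃ n₄
  dsimp only at hint hterm
  apply Complex.ofReal_injective
  rw [← integral_complex_ofReal]
  simp_rw [ofReal_sq_sum_norm_sq_sum_mul (G _) (h _)]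
  simp (disch := (intro _ _; fun_prop)) only [integral_finsetSum, hterm]
  rw [sum_wickPairings_mul_wickPairings]
  simp

/-- For a random `N × M` complex matrix `G` and an independent random vector `h ∈ ℂ^N`,
all of whose entries are (jointly) mutually independent `CN(0,1)`,
`E[‖Gᵀ h‖⁴] = (M² + M)(N² + N)`, where `(Gᵀ h)_m = Σ_n G n m * h n`. -/
theorem expectation_norm_pow_four_cascaded_gaussian
    {N M : ℕ} (hN : 0 < N) (hM : 0 < M)
    {Ω : Type*} [MeasurableSpace Ω] (μ : Measure Ω) [IsProbabilityMeasure μ]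
    (G : Ω → Matrix (Fin N) (Fin M) ℂ) (h : Ω → Fin N → ℂ)
    (hmeasG : ∀ n m, Measurable fun ω => G ω n m)
    (hmeash : ∀ n, Measurable fun ω => h ω n)
    (hindep : iIndepFun
      (Sum.elim (fun (p : Fin N × Fin M) => fun ω => G ω p.1 p.2)
        (fun (n : Fin N) => fun ω => h ω n)) μ)
    (hdistG : ∀ n m, Measure.map (fun ω => G ω n m) μ = stdComplexGaussian)
    (hdisth : ∀ n, Measure.map (fun ω => h ω n) μ = stdComplexGaussian) :
    (∫ ω, (∑ m, ‖∑ n, G ω n m * h ω n‖ ^ 2) ^ 2 ∂μ)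
      = ((M : ℝ) ^ 2 + M) * ((N : ℝ) ^ 2 + N) :=
  expectation_norm_pow_four_cascaded_gaussian_general μ G h hindep hdistG hdisth
end

section
/- For every real γ ≥ 0 and every real ε ≥ 0, log(1 + ε) − ε + (1 + ε)·γ/(1 + γ) ≤ log(1 + γ) (natural logarithm), with equality if and only if ε = γ. Consequently, for fixed γ ≥ 0 the function ε ↦ log(1 + ε) − ε + (1 + ε)γ/(1 + γ) on [0, ∞) attains its maximum value log(1 + γ) uniquely at ε = γ. -/
/-! With `a = 1 + ε` and `b = 1 + γ` the left-hand side is `log a - a / b + 1`, so the claim is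
`log (a / b) ≤ a / b - 1`, i.e. the tangent-line bound `log x ≤ x - 1`, strict unless `x = 1`. -/

namespace Real

variable {a b : ℝ}

theorem log_sub_div_le (ha : 0 < a) (hb : 0 < b) : log a - a / b ≤ log b - 1 := by
  have := log_le_sub_one_of_pos (div_pos ha hb)
  rw [log_div ha.ne' hb.ne'] at this
  linarith

theorem log_sub_div_lt (ha : 0 < a) (hb : 0 < b) (hab : a ≠ b) : log a - a / b < log b - 1 := by
  have := log_lt_sub_one_of_pos (div_pos ha hb) (div_ne_one_of_ne hab)
  rw [log_div ha.ne' hb.ne'] at this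
  linarith

theorem log_sub_div_eq_iff (ha : 0 < a) (hb : 0 < b) : log a - a / b = log b - 1 ↔ a = b := by
  refine ⟨fun h => ?_, fun h => ?_⟩
  · by_contra hab
    exact (log_sub_div_lt ha hb hab).ne h
  · rw [h, div_self hb.ne']

end Real

/-- Lagrangian dual transform (Section IV-C, Eq. (27)): for `γ, ε ≥ 0`,
`log(1+ε) − ε + (1+ε)γ/(1+γ) ≤ log(1+γ)`, with equality iff `ε = γ`.
Consequently the function of `ε` attains its maximum `log(1+γ)` uniquely at `ε = γ`. -/
theorem lagrangian_dual_transform (γ ε : ℝ) (hγ : 0 ≤ γ) (hε : 0 ≤ ε) :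
    Real.log (1 + ε) - ε + (1 + ε) * γ / (1 + γ) ≤ Real.log (1 + γ) ∧
      (Real.log (1 + ε) - ε + (1 + ε) * γ / (1 + γ) = Real.log (1 + γ) ↔ ε = γ) := by
  have ha : 0 < 1 + ε := by linarith
  have hb : 0 < 1 + γ := by linarith
  have hrewrite : Real.log (1 + ε) - ε + (1 + ε) * γ / (1 + γ) =
      Real.log (1 + ε) - (1 + ε) / (1 + γ) + 1 := by
    field_simp
    ring
  rw [hrewrite, ← eq_sub_iff_add_eq, Real.log_sub_div_eq_iff ha hb, add_right_inj]
  exact ⟨by linarith [Real.log_sub_div_le ha hb], Iff.rfl⟩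
end
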